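/- arXiv:1210.0466 — 4 statements merged into one kernel-verified Lean document; each statement's English description precedes it below -/
import Mathlib

section
/- Let V be a finite-dimensional vector space equipped with a nondegenerate symmetric bilinear form over an algebraically closed field of characteristic zero, let r < (dim V)/2, and let V' ⊆ V be a subspace of dimension d'. If every isotropic subspace of V of dimension r intersects V' nontrivially, then r + d' > dim V. -/
/-!
Induct on `r`, proving more generally that a nondegenerate space `V` with `2r < dim V` contains,
for every subspace `U` with `dim U + r ≤ dim V`, an `r`-dimensional totally isotropic `W` with
`W ∩ U = 0`. The isotropic vectors span `V`, and once `dim V ≥ 3` they are not contained in the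
union of two hyperplanes; so there is an isotropic `e` lying neither in `U` nor in `U^⊥`. Complete
`e` to a hyperbolic pair `(e, f)` and let `E` be its orthogonal complement, a nondegenerate space
of dimension `dim V - 2`. Projecting `U ∩ e^⊥` to `E` along `⟨e, f⟩` gives a subspace of dimension
`< dim U`, so by induction `E` contains an `(r - 1)`-dimensional totally isotropic `W₁` avoiding
it, and `W₁ + F e` avoids `U`. Taking `U = V'` contradicts the hypothesis unless
`dim V' > dim V - r`.
-/

open Module Polynomial

theorem exists_add_mul_ne_zero_and_mul_add_mul_sq_ne_zero {F : Type*} [Field F] [Infinite F]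
    {a b c d : F} (ha : a ≠ 0) (hd : d ≠ 0) :
    ∃ t, a + t * b ≠ 0 ∧ t * c + t ^ 2 * d ≠ 0 := by
  set P : F[X] := (C a + X * C b) * (X * C c + X ^ 2 * C d)
  have hP : P ≠ 0 := by
    refine mul_ne_zero (fun h => ha ?_) (fun h => hd ?_)
    · simpa using congrArg (coeff · 0) h
    · simpa using congrArg (coeff · 2) h
  obtain ⟨t, ht⟩ : ∃ t, P.eval t ≠ 0 := by
    by_contra! h
    exact hP (Polynomial.funext (by simpa using h))
  simp only [P, eval_mul, eval_add, eval_C, eval_X, eval_pow, mul_ne_zero_iff] at ht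
  exact ⟨t, ht⟩

namespace LinearMap.BilinForm

variable {F V : Type*} [Field F] [AddCommGroup V] [Module F V] {B : LinearMap.BilinForm F V}

def IsTotallyIsotropic (B : LinearMap.BilinForm F V) (W : Submodule F V) : Prop :=
  ∀ x ∈ W, ∀ y ∈ W, B x y = 0

structure IsHyperbolicPair (B : LinearMap.BilinForm F V) (e f : V) : Prop where
  left_self : B e e = 0
  right_self : B f f = 0
  apply_eq_one : B e f = 1

theorem Nondegenerate.exists_self_ne_zero [NeZero (2 : F)] [Nontrivial V]
    (hB : B.Nondegenerate) (hs : B.IsSymm) : ∃ x, B x x ≠ 0 :=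
  have : Invertible (2 : F) := invertibleOfNonzero two_ne_zero
  exists_bilinForm_self_ne_zero (fun h => not_nondegenerate_zero F V (h ▸ hB)) (isSymm_iff.1 hs)

theorem exists_ne_zero_self_eq_zero [IsAlgClosed F] [FiniteDimensional F V] (hs : B.IsSymm)
    (hV : 2 ≤ finrank F V) : ∃ e ≠ 0, B e e = 0 := by
  have : Nontrivial V := Module.nontrivial_of_finrank_pos (R := F) (by omega)
  obtain ⟨u, hu⟩ := exists_ne (0 : V)
  obtain ⟨v, huv⟩ := exists_linearIndependent_pair_of_one_lt_finrank (R := F) (by omega) hu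
  by_cases huu : B u u = 0
  · exact ⟨u, hu, huu⟩
  obtain ⟨t, ht⟩ := IsAlgClosed.exists_root (C (B u u) * X ^ 2 + C (2 * B u v) * X + C (B v v))
    (by rw [degree_quadratic huu]; exact two_ne_zero)
  refine ⟨t • u + v, fun h => ?_, ?_⟩
  · simpa using (LinearIndependent.pair_iff.1 huv t 1 (by simpa using h)).2
  · simp only [IsRoot, eval_add, eval_mul, eval_pow, eval_C, eval_X] at ht
    simp only [map_add, map_smul, LinearMap.add_apply, LinearMap.smul_apply, smul_eq_mul,
      hs.eq v u]
    linear_combination ht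

theorem exists_isHyperbolicPair [NeZero (2 : F)] (hB : B.Nondegenerate) (hs : B.IsSymm) {e : V}
    (he0 : e ≠ 0) (he : B e e = 0) : ∃ f, B.IsHyperbolicPair e f := by
  obtain ⟨g, hg⟩ : ∃ g, B e g ≠ 0 := by
    by_contra! h
    exact he0 (hB.1 e h)
  refine ⟨(B e g)⁻¹ • g + (-(B g g) / (2 * B e g ^ 2)) • e, he, ?_, ?_⟩
  · simp only [map_add, map_smul, LinearMap.add_apply, LinearMap.smul_apply, smul_eq_mul, he,
      hs.eq g e]
    field_simp
    ring
  · simp only [map_add, map_smul, smul_eq_mul, he, mul_zero, add_zero]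
    field_simp

namespace IsHyperbolicPair

variable {e f : V}

theorem notMem_span_singleton (h : B.IsHyperbolicPair e f) : f ∉ F ∙ e := by
  intro hf
  obtain ⟨c, rfl⟩ := Submodule.mem_span_singleton.1 hf
  simpa [h.left_self] using h.apply_eq_one

theorem finrank_span [FiniteDimensional F V] (h : B.IsHyperbolicPair e f) :
    finrank F (Submodule.span F {e, f}) = 2 := by
  have he : e ≠ 0 := by rintro rfl; simpa using h.apply_eq_one
  rw [Submodule.span_insert, Submodule.finrank_sup_span_singleton h.notMem_span_singleton,
    finrank_span_singleton he]

theorem disjoint_orthogonal (h : B.IsHyperbolicPair e f) (hs : B.IsSymm) :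
    Disjoint (Submodule.span F {e, f}) (B.orthogonal (Submodule.span F {e, f})) := by
  rw [Submodule.disjoint_def]
  intro x hx hxo
  obtain ⟨a, b, rfl⟩ := Submodule.mem_span_pair.1 hx
  have hae := hxo e (Submodule.subset_span (by simp))
  have hbf := hxo f (Submodule.subset_span (by simp))
  simp only [map_add, map_smul, smul_eq_mul, h.left_self, h.right_self, h.apply_eq_one,
    ← hs.eq e f] at hae hbf
  simp_all

theorem isCompl_orthogonal [FiniteDimensional F V] (h : B.IsHyperbolicPair e f) (hs : B.IsSymm) :
    IsCompl (Submodule.span F {e, f}) (B.orthogonal (Submodule.span F {e, f})) :=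
  (isCompl_orthogonal_iff_disjoint hs.isRefl).2 (h.disjoint_orthogonal hs)

theorem finrank_orthogonal [FiniteDimensional F V] (h : B.IsHyperbolicPair e f)
    (hB : B.Nondegenerate) :
    finrank F (B.orthogonal (Submodule.span F {e, f})) = finrank F V - 2 := by
  rw [LinearMap.BilinForm.finrank_orthogonal hB, h.finrank_span]

theorem nondegenerate_restrict_orthogonal [FiniteDimensional F V] (h : B.IsHyperbolicPair e f)
    (hB : B.Nondegenerate) (hs : B.IsSymm) :
    (B.restrict (B.orthogonal (Submodule.span F {e, f}))).Nondegenerate := by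
  refine B.nondegenerate_restrict_of_disjoint_orthogonal hs.isRefl ?_
  rw [orthogonal_orthogonal hB hs.isRefl]
  exact (h.disjoint_orthogonal hs).symm

theorem exists_mem_orthogonal_self_ne_zero [NeZero (2 : F)] [FiniteDimensional F V]
    (h : B.IsHyperbolicPair e f) (hB : B.Nondegenerate) (hs : B.IsSymm) (hV : 3 ≤ finrank F V) :
    ∃ z ∈ B.orthogonal (Submodule.span F {e, f}), B z z ≠ 0 := by
  have : Nontrivial (B.orthogonal (Submodule.span F {e, f})) :=
    Module.nontrivial_of_finrank_pos (R := F) (by rw [h.finrank_orthogonal hB]; omega)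
  obtain ⟨⟨z, hz⟩, hzz⟩ := (h.nondegenerate_restrict_orthogonal hB hs).exists_self_ne_zero
    (hs.restrict _)
  exact ⟨z, hz, hzz⟩

theorem apply_add_add_smul_self (h : B.IsHyperbolicPair e f) (hs : B.IsSymm) {w : V}
    (hw : w ∈ B.orthogonal (Submodule.span F {e, f})) (c : F) :
    B (f + w + c • e) (f + w + c • e) = B w w + 2 * c := by
  have hew : B e w = 0 := hw e (Submodule.subset_span (by simp))
  have hfw : B f w = 0 := hw f (Submodule.subset_span (by simp))
  simp only [map_add, map_smul, LinearMap.add_apply, LinearMap.smul_apply, smul_eq_mul,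
    h.left_self, h.right_self, h.apply_eq_one, hew, hfw, hs.eq w e, hs.eq w f, hs.eq f e]
  ring

theorem disjoint_map_subtype_sup_span_singleton [FiniteDimensional F V]
    (h : B.IsHyperbolicPair e f) (hs : B.IsSymm) {U : Submodule F V} (heU : e ∉ U)
    {W₁ : Submodule F (B.orthogonal (Submodule.span F {e, f}))}
    (hW₁ : Disjoint W₁ ((U ⊓ LinearMap.ker (B e)).map
      ((B.orthogonal _).projectionOnto _ (h.isCompl_orthogonal hs).symm))) :
    Disjoint (W₁.map (Submodule.subtype _) ⊔ F ∙ e) U := by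
  set π := (B.orthogonal _).projectionOnto _ (h.isCompl_orthogonal hs).symm
  rw [Submodule.disjoint_def]
  intro x hx hxU
  obtain ⟨_, ⟨w, hw, rfl⟩, _, hc, rfl⟩ := Submodule.mem_sup.1 hx
  obtain ⟨c, rfl⟩ := (Submodule.mem_span_singleton (R := F)).1 hc
  have hπ : π (w + c • e) = w := by
    rw [map_add, map_smul, Submodule.projectionOnto_apply_left,
      Submodule.projectionOnto_apply_of_mem_right _ (Submodule.subset_span (by simp)),
      smul_zero, add_zero]
  have hker : (w : V) + c • e ∈ LinearMap.ker (B e) := by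
    have hew : B e w = 0 := w.2 e (Submodule.subset_span (by simp))
    simp [hew, h.left_self]
  have hw0 : w = 0 :=
    Submodule.disjoint_def.1 hW₁ w hw (hπ ▸ Submodule.mem_map_of_mem ⟨hxU, hker⟩)
  subst hw0
  rw [Submodule.subtype_apply, Submodule.coe_zero, zero_add] at hxU ⊢
  by_contra hc0
  exact heU ((U.smul_mem_iff (left_ne_zero_of_smul hc0)).1 hxU)

end IsHyperbolicPair

theorem IsTotallyIsotropic.sup_span_singleton (hs : B.IsSymm) {W : Submodule F V}
    (hW : B.IsTotallyIsotropic W) {e : V} (he : B e e = 0) (hWe : W ≤ LinearMap.ker (B e)) :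
    B.IsTotallyIsotropic (W ⊔ F ∙ e) := by
  intro x hx y hy
  obtain ⟨w, hw, z, hz, rfl⟩ := Submodule.mem_sup.1 hx
  obtain ⟨w', hw', z', hz', rfl⟩ := Submodule.mem_sup.1 hy
  obtain ⟨a, rfl⟩ := (Submodule.mem_span_singleton (R := F)).1 hz
  obtain ⟨b, rfl⟩ := (Submodule.mem_span_singleton (R := F)).1 hz'
  have hew : B e w = 0 := LinearMap.mem_ker.1 (hWe hw)
  have hew' : B e w' = 0 := LinearMap.mem_ker.1 (hWe hw')
  simp only [map_add, map_smul, LinearMap.add_apply, LinearMap.smul_apply, smul_eq_mul,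
    hW w hw w' hw', hs.eq w e, hew, hew', he]
  ring

variable [FiniteDimensional F V] [IsAlgClosed F] [NeZero (2 : F)]

theorem span_setOf_self_eq_zero (hB : B.Nondegenerate) (hs : B.IsSymm)
    (hV : 2 ≤ finrank F V) : Submodule.span F {x | B x x = 0} = ⊤ := by
  obtain ⟨e, he0, he⟩ := exists_ne_zero_self_eq_zero hs hV
  obtain ⟨f, hef⟩ := exists_isHyperbolicPair hB hs he0 he
  set S := Submodule.span F {x | B x x = 0}
  have hH : Submodule.span F {e, f} ≤ S := Submodule.span_mono
    (Set.insert_subset hef.left_self (Set.singleton_subset_iff.2 hef.right_self))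
  have hE : B.orthogonal (Submodule.span F {e, f}) ≤ S := by
    intro w hw
    have hv : f + w + (-(B w w / 2)) • e ∈ S := Submodule.subset_span <| by
      change B _ _ = 0
      rw [hef.apply_add_add_smul_self hs hw]
      field_simp
      ring
    have hw' : w = (f + w + (-(B w w / 2)) • e) - f + (B w w / 2) • e := by module
    rw [hw']
    exact S.add_mem (S.sub_mem hv (hH (Submodule.subset_span (by simp))))
      (S.smul_mem _ (hH (Submodule.subset_span (by simp))))
  rw [eq_top_iff, ← (hef.isCompl_orthogonal hs).sup_eq_top]
  exact sup_le hH hE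

theorem exists_self_eq_zero_apply_ne_zero (hB : B.Nondegenerate) (hs : B.IsSymm)
    (hV : 2 ≤ finrank F V) {φ : Dual F V} (hφ : φ ≠ 0) : ∃ x, B x x = 0 ∧ φ x ≠ 0 := by
  by_contra! h
  refine hφ (LinearMap.ker_eq_top.1 (eq_top_iff.2 ?_))
  rw [← span_setOf_self_eq_zero hB hs hV, Submodule.span_le]
  exact h

theorem exists_self_eq_zero_apply_ne_zero_apply_ne_zero (hB : B.Nondegenerate) (hs : B.IsSymm)
    (hV : 3 ≤ finrank F V) {φ ψ : Dual F V} (hφ : φ ≠ 0) (hψ : ψ ≠ 0) :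
    ∃ x, B x x = 0 ∧ φ x ≠ 0 ∧ ψ x ≠ 0 := by
  by_contra! hne
  obtain ⟨x, hx, hφx⟩ := exists_self_eq_zero_apply_ne_zero hB hs (by omega) hφ
  obtain ⟨y, hy, hψy⟩ := exists_self_eq_zero_apply_ne_zero hB hs (by omega) hψ
  have hψx : ψ x = 0 := hne x hx hφx
  have hφy : φ y = 0 := by_contra fun h => hψy (hne y hy h)
  by_cases hxy : B x y = 0
  · refine hψy ?_
    have := hne (x + y) (by simp [hx, hy, hxy, hs.eq y x]) (by simpa [hφy] using hφx)
    simpa [hψx] using this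
  set y' := (B x y)⁻¹ • y
  have hpair : B.IsHyperbolicPair y' x :=
    ⟨by simp [y', hy], hx, by simp [y', hs.eq y x, hxy]⟩
  have hφy' : φ y' = 0 := by simp [y', hφy]
  have hψy' : ψ y' ≠ 0 := by simp [y', hxy, hψy]
  obtain ⟨z, hz, hzz⟩ := hpair.exists_mem_orthogonal_self_ne_zero hB hs hV
  -- The isotropic vectors `x + t z - (t² B(z,z)/2) y'` trace a conic on which `φ` and `ψ`
  -- restrict to nonzero polynomials in `t`.
  obtain ⟨t, hφt, hψt⟩ := exists_add_mul_ne_zero_and_mul_add_mul_sq_ne_zero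
    (a := φ x) (b := φ z) (c := ψ z) (d := -(B z z / 2) * ψ y') hφx
    (mul_ne_zero (neg_ne_zero.2 (div_ne_zero hzz two_ne_zero)) hψy')
  set v := x + t • z + (-(t ^ 2 * B z z / 2)) • y'
  have hv : B v v = 0 := by
    rw [hpair.apply_add_add_smul_self hs (Submodule.smul_mem _ t hz)]
    simp only [map_smul, LinearMap.smul_apply, smul_eq_mul]
    field_simp
    ring
  refine hψt ?_
  have := hne v hv (by simpa [v, hφy'] using hφt)
  simp only [v, map_add, map_smul, smul_eq_mul, hψx] at this
  linear_combination this

theorem exists_self_eq_zero_notMem_finrank_inf_ker_le (hB : B.Nondegenerate) (hs : B.IsSymm)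
    (hV : 3 ≤ finrank F V) {U : Submodule F V} (hU : U ≠ ⊤) :
    ∃ e, B e e = 0 ∧ e ∉ U ∧ finrank F ↥(U ⊓ LinearMap.ker (B e)) ≤ finrank F U - 1 := by
  obtain ⟨φ, hφ, hUφ⟩ := U.exists_le_ker_of_lt_top hU.lt_top
  rcases eq_or_ne U ⊥ with rfl | hU0
  · obtain ⟨e, he, hφe⟩ := exists_self_eq_zero_apply_ne_zero hB hs (by omega) hφ
    exact ⟨e, he, fun h => hφe (hUφ h), by simp⟩
  obtain ⟨u, hu, hu0⟩ := Submodule.exists_mem_ne_zero_of_ne_bot hU0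
  have hBu : B u ≠ 0 := fun h => hu0 (hB.1 u fun y => by simp [h])
  obtain ⟨e, he, hφe, hue⟩ := exists_self_eq_zero_apply_ne_zero_apply_ne_zero hB hs hV hφ hBu
  refine ⟨e, he, fun h => hφe (hUφ h), ?_⟩
  have hlt : U ⊓ LinearMap.ker (B e) < U := by
    refine inf_le_left.lt_of_ne fun h => hue ?_
    have hu' : u ∈ U ⊓ LinearMap.ker (B e) := by rwa [h]
    rw [← hs.eq e u]
    exact hu'.2
  have := Submodule.finrank_lt_finrank_of_lt hlt
  omega

theorem exists_isTotallyIsotropic_disjoint (r : ℕ) (hB : B.Nondegenerate) (hs : B.IsSymm)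
    {U : Submodule F V} (hr : 2 * r < finrank F V) (hU : finrank F U + r ≤ finrank F V) :
    ∃ W : Submodule F V, finrank F W = r ∧ B.IsTotallyIsotropic W ∧ Disjoint W U := by
  induction r generalizing V with
  | zero => exact ⟨⊥, finrank_bot F V, by simp [IsTotallyIsotropic], disjoint_bot_left⟩
  | succ r ih =>
    have hUtop : U ≠ ⊤ := fun h => by rw [h, finrank_top] at hU; omega
    obtain ⟨e, he, heU, hUe⟩ :=
      exists_self_eq_zero_notMem_finrank_inf_ker_le hB hs (by omega) hUtop
    have he0 : e ≠ 0 := fun h => heU (h ▸ U.zero_mem)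
    obtain ⟨f, hef⟩ := exists_isHyperbolicPair hB hs he0 he
    set H := Submodule.span F {e, f}
    set E := B.orthogonal H
    have hHE : IsCompl H E := hef.isCompl_orthogonal hs
    set π := E.projectionOnto H hHE.symm
    obtain ⟨W₁, hW₁, hW₁iso, hW₁U⟩ := ih (B := B.restrict E)
      (hef.nondegenerate_restrict_orthogonal hB hs) (hs.restrict E)
      (U := (U ⊓ LinearMap.ker (B e)).map π)
      (by rw [hef.finrank_orthogonal hB]; omega)
      (by have := Submodule.finrank_map_le π (U ⊓ LinearMap.ker (B e))
          rw [hef.finrank_orthogonal hB]; omega)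
    set X := W₁.map E.subtype
    have hXE : X ≤ E := Submodule.map_subtype_le E W₁
    have hXe : X ≤ LinearMap.ker (B e) := fun x hx => hXE hx e (Submodule.subset_span (by simp))
    have heX : e ∉ X := fun h =>
      he0 (hHE.disjoint.le_bot ⟨Submodule.subset_span (by simp), hXE h⟩)
    refine ⟨X ⊔ F ∙ e, ?_, ?_, hef.disjoint_map_subtype_sup_span_singleton hs heU hW₁U⟩
    · rw [Submodule.finrank_sup_span_singleton heX, Submodule.finrank_map_subtype_eq, hW₁]
    · refine IsTotallyIsotropic.sup_span_singleton hs ?_ he hXe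
      rintro _ ⟨x, hx, rfl⟩ _ ⟨y, hy, rfl⟩
      exact hW₁iso x hx y hy

end LinearMap.BilinForm

theorem stmt_1_general (F V : Type*) [Field F] [IsAlgClosed F] [CharZero F]
    [AddCommGroup V] [Module F V] [FiniteDimensional F V]
    (B : LinearMap.BilinForm F V) (hB : B.Nondegenerate)
    (hBsymm : ∀ v w : V, B v w = B w v)
    (V' : Submodule F V) (d' r : ℕ) (hd' : finrank F V' = d')
    (hrV : 2 * r < finrank F V)
    (h : ∀ W : Submodule F V, finrank F W = r →
      (∀ x ∈ W, ∀ y ∈ W, B x y = 0) → 1 ≤ finrank F ↥(W ⊓ V')) :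
    finrank F V < r + d' := by
  by_contra! hle
  obtain ⟨W, hWr, hWiso, hWV'⟩ := LinearMap.BilinForm.exists_isTotallyIsotropic_disjoint r hB
    ⟨hBsymm⟩ (U := V') hrV (by omega)
  have := h W hWr hWiso
  rw [hWV'.eq_bot, finrank_bot] at this
  omega

/-- If `V` carries a nondegenerate symmetric bilinear form, `r < (dim V)/2`, and every
`r`-dimensional isotropic subspace of `V` intersects the subspace `V'` (of dimension `d'`)
nontrivially, then `r + d' > dim V`. -/
theorem stmt_1 (F V : Type*) [Field F] [IsAlgClosed F] [CharZero F]
    [AddCommGroup V] [Module F V] [FiniteDimensional F V]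
    (B : LinearMap.BilinForm F V) (hB : B.Nondegenerate)
    (hBsymm : ∀ v w : V, B v w = B w v)
    (V' : Submodule F V) (d' r : ℕ) (hd' : finrank F V' = d')
    (hr : 0 < r) (hrV : 2 * r < finrank F V)
    (h : ∀ W : Submodule F V, finrank F W = r →
      (∀ x ∈ W, ∀ y ∈ W, B x y = 0) → 1 ≤ finrank F ↥(W ⊓ V')) :
    finrank F V < r + d' :=
  stmt_1_general F V B hB hBsymm V' d' r hd' hrV h
end

section
/- Let X be an endomorphism of a finite-dimensional vector space V over an algebraically closed field F of characteristic zero with rank X < dim W for a subspace W ⊆ V. Then there exists g ∈ GL(V) such that rank(pr_W ∘ (gXg⁻¹)|_W) = rank X, where pr_W is the projection onto W along a fixed complement. -/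
/-!
Choose a complement `P` of `ker X`, enlarge it to a subspace `U` with `dim U = dim W`, and
choose a complement `U'` of `U` meeting `range X` trivially, which is possible because
`dim (range X) ≤ dim U`. Any `g` carrying `U` onto `W` and `U'` onto `W'` works: `g X g⁻¹` maps
`W` onto `g (X U) = g (range X)`, which meets `W' = ker pr_W` trivially, so `pr_W` does not
lower its dimension.
-/

open Module

namespace Submodule

variable {K V : Type*} [DivisionRing K] [AddCommGroup V] [Module K V]

theorem exists_notMem_notMem_of_ne_top {U R : Submodule K V} (hU : U ≠ ⊤) (hR : R ≠ ⊤) :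
    ∃ v, v ∉ U ∧ v ∉ R := by
  by_contra! h
  have hcover : ((⊤ : Submodule K V) : Set V) ⊆ U ∪ R :=
    fun v _ ↦ or_iff_not_imp_left.2 (h v)
  rcases AddSubgroupClass.subset_union.1 hcover with hU' | hR'
  exacts [hU (top_le_iff.1 hU'), hR (top_le_iff.1 hR')]

variable [FiniteDimensional K V]

theorem disjoint_of_finrank_add_le_finrank_sup {s t : Submodule K V}
    (h : finrank K s + finrank K t ≤ finrank K ↥(s ⊔ t)) : Disjoint s t := by
  have := finrank_sup_add_finrank_inf_eq s t
  rw [disjoint_iff, ← finrank_eq_zero]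
  omega

theorem exists_le_finrank_eq (P : Submodule K V) {k : ℕ} (hPk : finrank K P ≤ k)
    (hk : k ≤ finrank K V) : ∃ U, P ≤ U ∧ finrank K U = k := by
  induction k, hPk using Nat.le_induction with
  | base => exact ⟨P, le_rfl, rfl⟩
  | succ k _ ih =>
    obtain ⟨U, hPU, rfl⟩ := ih (by omega)
    obtain ⟨v, -, hv⟩ := SetLike.exists_of_lt <| lt_top_iff_ne_top.2 fun hU : U = ⊤ ↦ by
      rw [hU, finrank_top] at hk
      omega
    exact ⟨U ⊔ span K {v}, hPU.trans le_sup_left, finrank_sup_span_singleton hv⟩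

-- Adjoin some `v ∉ U ∪ R` to both `U` and `R`; if `U''` solves the enlarged problem,
-- `U'' ⊔ span {v}` solves the original one (both disjointness claims by counting dimensions).
theorem exists_isCompl_disjoint {U R : Submodule K V} (hRU : finrank K R ≤ finrank K U) :
    ∃ U', IsCompl U U' ∧ Disjoint R U' := by
  induction hd : finrank K V - finrank K U generalizing U R with
  | zero =>
    refine ⟨⊥, ?_, disjoint_bot_right⟩
    rw [eq_top_of_finrank_eq (le_antisymm U.finrank_le (by omega))]
    exact isCompl_top_bot
  | succ d ih =>
    have hU : U ≠ ⊤ := fun hU ↦ by rw [hU, finrank_top] at hd; omega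
    have hR : R ≠ ⊤ := fun hR ↦ by
      rw [hR, finrank_top] at hRU
      exact absurd (finrank_lt hU) (by omega)
    obtain ⟨v, hvU, hvR⟩ := exists_notMem_notMem_of_ne_top hU hR
    obtain ⟨U'', hUU'', hRU''⟩ := ih (U := U ⊔ span K {v}) (R := R ⊔ span K {v})
      (by rw [finrank_sup_span_singleton hvU, finrank_sup_span_singleton hvR]; omega)
      (by rw [finrank_sup_span_singleton hvU]; omega)
    have hvU'' : v ∉ U'' := fun hv ↦ hvR <| by
      rw [disjoint_def.1 hRU'' v (mem_sup_right (mem_span_singleton_self v)) hv]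
      exact R.zero_mem
    have hsup : U ⊔ (U'' ⊔ span K {v}) = ⊤ := by
      rw [sup_comm U'', ← sup_assoc, hUU''.sup_eq_top]
    refine ⟨U'' ⊔ span K {v}, ⟨disjoint_of_finrank_add_le_finrank_sup ?_,
      codisjoint_iff.2 hsup⟩, disjoint_of_finrank_add_le_finrank_sup ?_⟩
    · have := finrank_add_eq_of_isCompl hUU''
      rw [hsup, finrank_top, finrank_sup_span_singleton hvU'']
      rw [finrank_sup_span_singleton hvU] at this
      omega
    · have hRsup : R ⊔ (U'' ⊔ span K {v}) = (R ⊔ span K {v}) ⊔ U'' := by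
        rw [sup_comm U'', ← sup_assoc, sup_right_comm]
      have := finrank_sup_add_finrank_inf_eq (R ⊔ span K {v}) U''
      rw [hRU''.eq_bot, finrank_bot, finrank_sup_span_singleton hvR] at this
      rw [hRsup, finrank_sup_span_singleton hvU'']
      omega

theorem exists_linearEquiv_map_eq_map_eq {U U' W W' : Submodule K V} (hU : IsCompl U U')
    (hW : IsCompl W W') (hUW : finrank K U = finrank K W) :
    ∃ g : V ≃ₗ[K] V, U.map (g : V →ₗ[K] V) = W ∧ U'.map (g : V →ₗ[K] V) = W' := by
  have hU'W' : finrank K U' = finrank K W' := by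
    have := finrank_add_eq_of_isCompl hU
    have := finrank_add_eq_of_isCompl hW
    omega
  obtain ⟨e⟩ := FiniteDimensional.nonempty_linearEquiv_of_finrank_eq hUW
  obtain ⟨e'⟩ := FiniteDimensional.nonempty_linearEquiv_of_finrank_eq hU'W'
  let g :=
    (prodEquivOfIsCompl U U' hU).symm ≪≫ₗ e.prodCongr e' ≪≫ₗ prodEquivOfIsCompl W W' hW
  refine ⟨g, eq_of_le_of_finrank_eq ?_ ?_, eq_of_le_of_finrank_eq ?_ ?_⟩
  · rintro _ ⟨u, hu : u ∈ U, rfl⟩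
    simp [g, projectionOnto_apply_of_mem_right hU.symm hu]
  · rw [LinearEquiv.finrank_map_eq, hUW]
  · rintro _ ⟨u, hu : u ∈ U', rfl⟩
    simp [g, projectionOnto_apply_of_mem_right hU hu]
  · rw [LinearEquiv.finrank_map_eq, hU'W']

end Submodule

namespace LinearMap

variable {K V V₂ : Type*} [DivisionRing K] [AddCommGroup V] [Module K V] [AddCommGroup V₂]
  [Module K V₂]

theorem map_eq_range_of_codisjoint_ker {p : Submodule K V} {f : V →ₗ[K] V₂}
    (h : Codisjoint p (ker f)) : p.map f = range f := by
  rw [← Submodule.map_top, ← h.eq_top, Submodule.map_sup, le_ker_iff_map.1 le_rfl, sup_bot_eq]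

theorem finrank_map_eq_of_disjoint_ker {p : Submodule K V} [FiniteDimensional K p]
    {f : V →ₗ[K] V₂} (h : Disjoint p (ker f)) : finrank K (p.map f) = finrank K p := by
  rw [← range_domRestrict]
  exact finrank_range_of_inj (injective_domRestrict_iff.2 h)

theorem exists_isCompl_map_eq_range_disjoint_range [FiniteDimensional K V] (X : V →ₗ[K] V)
    {m : ℕ} (hXm : finrank K (range X) ≤ m) (hm : m ≤ finrank K V) :
    ∃ U U' : Submodule K V, IsCompl U U' ∧ finrank K U = m ∧ U.map X = range X ∧
      Disjoint (range X) U' := by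
  obtain ⟨P, hP⟩ := (ker X).exists_isCompl
  have hPX : finrank K P = finrank K (range X) := by
    have := finrank_range_add_finrank_ker X
    have := Submodule.finrank_add_eq_of_isCompl hP
    omega
  obtain ⟨U, hPU, hU⟩ := P.exists_le_finrank_eq (hPX ▸ hXm) hm
  obtain ⟨U', hUU', hXU'⟩ := Submodule.exists_isCompl_disjoint (R := range X) (hU ▸ hXm)
  exact ⟨U, U', hUU', hU,
    map_eq_range_of_codisjoint_ker (hP.symm.codisjoint.mono_left hPU), hXU'⟩

end LinearMap

theorem Submodule.finrank_range_projectionOnto_comp_comp_subtype {K V : Type*} [DivisionRing K]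
    [AddCommGroup V] [Module K V] [FiniteDimensional K V] {W W' : Submodule K V}
    (hW : IsCompl W W') {f : V →ₗ[K] V} (hf : Disjoint (W.map f) W') :
    finrank K (LinearMap.range (W.projectionOnto W' hW ∘ₗ f ∘ₗ W.subtype)) =
      finrank K (W.map f) := by
  rw [LinearMap.range_comp, LinearMap.range_comp, range_subtype]
  exact LinearMap.finrank_map_eq_of_disjoint_ker (by rwa [ker_projectionOnto])

theorem stmt_3_general (F V : Type*) [Field F]
    [AddCommGroup V] [Module F V] [FiniteDimensional F V]
    (W W' : Submodule F V) (hc : IsCompl W W')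
    (X : V →ₗ[F] V) (hX : finrank F ↥(LinearMap.range X) < finrank F W) :
    ∃ g : V ≃ₗ[F] V,
      finrank F ↥(LinearMap.range
        ((W.linearProjOfIsCompl W' hc) ∘ₗ
          (g.toLinearMap ∘ₗ X ∘ₗ g.symm.toLinearMap) ∘ₗ W.subtype)) =
      finrank F ↥(LinearMap.range X) := by
  obtain ⟨U, U', hUU', hU, hXU, hXU'⟩ :=
    X.exists_isCompl_map_eq_range_disjoint_range hX.le W.finrank_le
  obtain ⟨g, hgU, hgU'⟩ := Submodule.exists_linearEquiv_map_eq_map_eq hUU' hc hU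
  have hgXW : W.map (g.toLinearMap ∘ₗ X ∘ₗ g.symm.toLinearMap) =
      (LinearMap.range X).map (g : V →ₗ[F] V) := by
    rw [Submodule.map_comp, Submodule.map_comp, (Submodule.map_symm_eq_iff g).2 hgU, hXU]
  have hdisj : Disjoint (W.map (g.toLinearMap ∘ₗ X ∘ₗ g.symm.toLinearMap)) W' := by
    rw [hgXW, ← hgU']
    exact Submodule.disjoint_map g.injective hXU'
  refine ⟨g, ?_⟩
  rw [← LinearEquiv.finrank_map_eq g, ← hgXW]
  exact Submodule.finrank_range_projectionOnto_comp_comp_subtype hc hdisj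

/-- If `rank X < dim W` for a subspace `W ⊆ V` with fixed complement `W'`, then some
conjugate `g X g⁻¹` of `X` satisfies `rank (pr_W ∘ (g X g⁻¹)|_W) = rank X`, where `pr_W`
is the projection onto `W` along `W'`. -/
theorem stmt_3 (F V : Type*) [Field F] [IsAlgClosed F] [CharZero F]
    [AddCommGroup V] [Module F V] [FiniteDimensional F V]
    (W W' : Submodule F V) (hc : IsCompl W W')
    (X : V →ₗ[F] V) (hX : finrank F ↥(LinearMap.range X) < finrank F W) :
    ∃ g : V ≃ₗ[F] V,
      finrank F ↥(LinearMap.range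
        ((W.linearProjOfIsCompl W' hc) ∘ₗ
          (g.toLinearMap ∘ₗ X ∘ₗ g.symm.toLinearMap) ∘ₗ W.subtype)) =
      finrank F ↥(LinearMap.range X) :=
  stmt_3_general F V W W' hc X hX
end

section
/- Let V be a finite-dimensional symplectic vector space over an algebraically closed field F of characteristic zero, with symplectic form ω, and let X ∈ sp(V) (i.e. ω(Xv, w) + ω(v, Xw) = 0 for all v, w). If for some λ ∈ F one has 2·rank(X - λ·Id_V) < dim V, then λ = 0. -/
/-!
If `λ ≠ 0`, the `λ`-eigenspace `E` of a skew endomorphism `X` is totally isotropic, since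
`λ ω(v, w) = ω(Xv, w) = -ω(v, Xw) = -λ ω(v, w)` for `v, w ∈ E`. A totally isotropic subspace of a
nondegenerate form has at most half the dimension, and `dim E = dim V - rank(X - λ)` by
rank–nullity, so `2 rank(X - λ) ≥ dim V`.
-/

open Module

namespace LinearMap.BilinForm

variable {K V : Type*} [Field K] [AddCommGroup V] [Module K V]

theorem two_mul_finrank_le_of_le_orthogonal [FiniteDimensional K V]
    {B : LinearMap.BilinForm K V} (hB : B.Nondegenerate) {W : Submodule K V}
    (hW : W ≤ B.orthogonal W) :
    2 * finrank K W ≤ finrank K V := by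
  have hle := Submodule.finrank_mono hW
  rw [finrank_orthogonal hB] at hle
  omega

variable {B : LinearMap.BilinForm K V} {X : End K V}

theorem apply_eq_zero_of_mem_eigenspace_of_add_ne_zero (hX : ∀ v w, B (X v) w = -B v (X w))
    {μ ν : K} (hμν : μ + ν ≠ 0) {v w : V} (hv : v ∈ X.eigenspace μ)
    (hw : w ∈ X.eigenspace ν) : B v w = 0 := by
  have hskew := hX v w
  rw [End.mem_eigenspace_iff.mp hv, End.mem_eigenspace_iff.mp hw, map_smul, map_smul,
    smul_apply, smul_eq_mul, smul_eq_mul] at hskew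
  have : (μ + ν) * B v w = 0 := by linear_combination hskew
  exact (mul_eq_zero.mp this).resolve_left hμν

theorem eigenspace_le_orthogonal [CharZero K] (hX : ∀ v w, B (X v) w = -B v (X w))
    {μ : K} (hμ : μ ≠ 0) : X.eigenspace μ ≤ B.orthogonal (X.eigenspace μ) := by
  intro v hv
  rw [mem_orthogonal_iff]
  intro w hw
  refine apply_eq_zero_of_mem_eigenspace_of_add_ne_zero hX ?_ hw hv
  simpa [← two_mul] using hμ

end LinearMap.BilinForm

theorem stmt_5_general (F V : Type*) [Field F] [CharZero F]
    [AddCommGroup V] [Module F V] [FiniteDimensional F V]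
    (ω : LinearMap.BilinForm F V) (hnd : ω.Nondegenerate)
    (X : Module.End F V) (hX : ∀ v w : V, ω (X v) w = - ω v (X w))
    (lam : F)
    (h : 2 * finrank F ↥(LinearMap.range (X - lam • 1)) < finrank F V) :
    lam = 0 := by
  by_contra hlam
  have hE := ω.two_mul_finrank_le_of_le_orthogonal hnd (ω.eigenspace_le_orthogonal hX hlam)
  have hrank := (X - lam • 1).finrank_range_add_finrank_ker
  rw [← Module.End.eigenspace_def] at hrank
  omega

/-- For `X ∈ sp(V)` (skew w.r.t. a nondegenerate alternating form `ω`), if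
`2·rank(X - λ·Id) < dim V` for some scalar `λ`, then `λ = 0`. -/
theorem stmt_5 (F V : Type*) [Field F] [IsAlgClosed F] [CharZero F]
    [AddCommGroup V] [Module F V] [FiniteDimensional F V]
    (ω : LinearMap.BilinForm F V) (hnd : ω.Nondegenerate)
    (halt : ∀ v : V, ω v v = 0)
    (X : Module.End F V) (hX : ∀ v w : V, ω (X v) w = - ω v (X w))
    (lam : F)
    (h : 2 * finrank F ↥(LinearMap.range (X - lam • 1)) < finrank F V) :
    lam = 0 :=
  stmt_5_general F V ω hnd X hX lam h
end

section
/- Let V be a finite-dimensional vector space over an algebraically closed field F with a nondegenerate symmetric or alternating bilinear form B, and let X ∈ End(V) be skew with respect to B (B(Xv,w) = -B(v,Xw)). Then for every λ ∈ F, the generalized eigenspaces V_λ^X and V_{-λ}^X have equal dimension. -/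
open Module

lemma aux_finrank_ker_dualMap {F V : Type*} [Field F] [AddCommGroup V] [Module F V]
    [FiniteDimensional F V] (g : V →ₗ[F] V) :
    finrank F ↥(LinearMap.ker g.dualMap) = finrank F ↥(LinearMap.ker g) := by
  have h1 := LinearMap.finrank_range_add_finrank_ker g
  have h2 := LinearMap.finrank_range_add_finrank_ker g.dualMap
  have h3 := LinearMap.finrank_range_dualMap_eq_finrank_range g
  have h4 : finrank F (Dual F V) = finrank F V := Subspace.dual_finrank_eq
  omega

lemma aux_dualMap_pow {F V : Type*} [Field F] [AddCommGroup V] [Module F V]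
    (g : Module.End F V) (n : ℕ) :
    (g ^ n).dualMap = (g.dualMap : Module.End F (Dual F V)) ^ n := by
  induction n with
  | zero =>
      rw [pow_zero, pow_zero]
      ext f x
      rfl
  | succ k ih =>
      rw [pow_succ', pow_succ, Module.End.mul_eq_comp, Module.End.mul_eq_comp, ← ih]
      rfl

/-- If `X` is skew with respect to a nondegenerate symmetric or alternating bilinear form `B`,
then the generalized eigenspaces of `X` for `λ` and `-λ` have equal dimensions. -/
theorem stmt_7 (F V : Type*) [Field F] [IsAlgClosed F]
    [AddCommGroup V] [Module F V] [FiniteDimensional F V]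
    (B : LinearMap.BilinForm F V) (hnd : B.Nondegenerate)
    (hB : (∀ v w : V, B v w = B w v) ∨ (∀ v : V, B v v = 0))
    (X : Module.End F V) (hX : ∀ v w : V, B (X v) w = - B v (X w))
    (lam : F) :
    finrank F ↥(LinearMap.ker ((X - lam • 1) ^ finrank F V)) =
      finrank F ↥(LinearMap.ker ((X - (-lam) • 1) ^ finrank F V)) := by
  set n := finrank F V with hn
  set Y : Module.End F V := X - lam • 1 with hY
  have hnegs : X - (-lam) • 1 = X + lam • 1 := by
    rw [neg_smul, sub_neg_eq_add]
  set A : Module.End F V := X + lam • 1 with hA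
  let e := B.toDual hnd
  have key : e.toLinearMap ∘ₗ A = ((-1 : F) • Y.dualMap) ∘ₗ e.toLinearMap := by
    ext v w
    simp only [LinearMap.comp_apply, LinearMap.smul_apply, LinearMap.dualMap_apply',
      LinearEquiv.coe_coe]
    have h2 : e (A v) w = B (A v) w := rfl
    have h1 : e v (Y w) = B v (Y w) := rfl
    rw [h2, h1]
    simp only [hA, hY, LinearMap.add_apply, LinearMap.sub_apply, LinearMap.smul_apply,
      Module.End.one_apply, map_add, map_sub, map_smul, LinearMap.map_smul₂,
      LinearMap.add_apply, LinearMap.sub_apply, hX v w, smul_eq_mul]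
    ring
  have keyn : e.toLinearMap ∘ₗ (A ^ n : Module.End F V)
      = (((-1 : F) • Y.dualMap : Module.End F (Dual F V)) ^ n) ∘ₗ e.toLinearMap := by
    induction n with
    | zero =>
        rw [pow_zero, pow_zero]
        ext x
        rfl
    | succ k ih =>
        rw [pow_succ, pow_succ, Module.End.mul_eq_comp, Module.End.mul_eq_comp,
          ← LinearMap.comp_assoc, ih, LinearMap.comp_assoc, key, ← LinearMap.comp_assoc]
  -- kernels
  have hker : LinearMap.ker (A ^ n)
      = Submodule.comap e.toLinearMap (LinearMap.ker ((Y ^ n).dualMap)) := by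
    have h1 : LinearMap.ker (A ^ n) = LinearMap.ker (e.toLinearMap ∘ₗ (A ^ n)) :=
      (LinearEquiv.ker_comp _ _).symm
    rw [h1, keyn, LinearMap.ker_comp]
    congr 1
    rw [smul_pow, LinearMap.ker_smul _ _ (by simp : ((-1 : F) ^ n) ≠ 0), aux_dualMap_pow]
  have hfin : finrank F ↥(LinearMap.ker (A ^ n)) = finrank F ↥(LinearMap.ker (Y ^ n)) := by
    rw [hker, Submodule.comap_equiv_eq_map_symm]
    rw [LinearEquiv.finrank_map_eq]
    exact aux_finrank_ker_dualMap (Y ^ n)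
  rw [hnegs]
  exact hfin.symm
end
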